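/- For all natural numbers n, k, parameters α, and nonzero λ in a field of characteristic zero: y*_{1,α}(n,k;λ) = (1/k!) Σ_{j=0}^{k} C(k,j) j! λ^j (λ+1)_{k-j,α} · S_2^*(n,j | α/λ), where S_2^*(n,j|β) is the new type degenerate Stirling number of the second kind. -/
import Mathlib


open Finset

/-- The degenerate falling factorial `(x)_{n,α} = ∏_{i=0}^{n-1} (x - i·α)`. -/
def degFall {R : Type*} [CommRing R] (α x : R) (n : ℕ) : R :=
  ∏ i ∈ Finset.range n, (x - (i : R) * α)

/-- The ordinary falling factorial `(x)_n = x(x-1)⋯(x-n+1)`. -/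
def fall {R : Type*} [CommRing R] (x : R) (n : ℕ) : R :=
  ∏ i ∈ Finset.range n, (x - (i : R))

/-- Signed Stirling numbers of the first kind, via the standard recurrence. -/
def stirling1 : ℕ → ℕ → ℤ
  | 0, 0 => 1
  | 0, _ + 1 => 0
  | n + 1, 0 => -(n : ℤ) * stirling1 n 0
  | n + 1, k + 1 => stirling1 n k - (n : ℤ) * stirling1 n (k + 1)

/-- The Simsek numbers `y₁(n,k;λ) = (1/k!) Σ_{j=0}^{k} C(k,j) jⁿ λʲ`. -/
noncomputable def simsek {F : Type*} [Field F] (lam : F) (n k : ℕ) : F :=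
  (k.factorial : F)⁻¹ * ∑ j ∈ Finset.range (k + 1),
    (k.choose j : F) * (j : F) ^ n * lam ^ j

/-- The new type degenerate Simsek numbers
`y*₁,α(n,k;λ) = (1/k!) Σ_{ℓ=0}^{k} Σ_{j=0}^{ℓ} C(ℓ,j) α^{k-ℓ} s(k,ℓ) λʲ jⁿ`. -/
noncomputable def ystar {F : Type*} [Field F] (α lam : F) (n k : ℕ) : F :=
  (k.factorial : F)⁻¹ * ∑ ℓ ∈ Finset.range (k + 1), ∑ j ∈ Finset.range (ℓ + 1),
    (ℓ.choose j : F) * α ^ (k - ℓ) * ((stirling1 k ℓ : ℤ) : F) * lam ^ j * (j : F) ^ n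

/-- The new type degenerate Stirling numbers of the second kind `S₂*(n,j|β)`,
given by `(1/j!) Σ_{ℓ=0}^{j} Σ_{i=0}^{ℓ} C(ℓ,i) β^{j-ℓ} s(j,ℓ) (-1)^{ℓ-i} iⁿ`. -/
noncomputable def stirling2star {F : Type*} [Field F] (β : F) (n j : ℕ) : F :=
  (j.factorial : F)⁻¹ * ∑ ℓ ∈ Finset.range (j + 1), ∑ i ∈ Finset.range (ℓ + 1),
    (ℓ.choose i : F) * β ^ (j - ℓ) * ((stirling1 j ℓ : ℤ) : F) * (-1 : F) ^ (ℓ - i) * (i : F) ^ n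

/-! ### Auxiliary lemmas -/

open Polynomial

lemma stirling1_eq_zero : ∀ {k l : ℕ}, k < l → stirling1 k l = 0
  | 0, _ + 1, _ => rfl
  | k + 1, l + 1, h => by
    have h1 : k < l := Nat.lt_of_succ_lt_succ h
    rw [stirling1, stirling1_eq_zero h1, stirling1_eq_zero (h1.trans (Nat.lt_succ_self l))]
    ring

lemma prod_sub_eq_sum_stirling1 {R : Type*} [CommRing R] (a Y : R) (k : ℕ) :
    ∏ m ∈ range k, (Y - (m : R) * a)
      = ∑ l ∈ range (k + 1), ((stirling1 k l : ℤ) : R) * a ^ (k - l) * Y ^ l := by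
  induction k with
  | zero => simp [stirling1]
  | succ k ih =>
    rw [prod_range_succ, ih]
    rw [Finset.sum_range_succ' (fun l => ((stirling1 (k+1) l : ℤ) : R) * a ^ (k + 1 - l) * Y ^ l)]
    have h0 : ((stirling1 (k+1) 0 : ℤ) : R) = -(k:R) * ((stirling1 k 0 : ℤ):R) := by
      rw [stirling1]; push_cast; ring
    have hs : ∀ l, ((stirling1 (k+1) (l+1) : ℤ) : R)
        = ((stirling1 k l : ℤ):R) - (k:R) * ((stirling1 k (l+1) : ℤ):R) := by
      intro l; rw [stirling1]; push_cast; ring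
    simp only [hs, h0]
    have expand : (∑ l ∈ range (k + 1), ((stirling1 k l : ℤ) : R) * a ^ (k - l) * Y ^ l) *
        (Y - (k:R) * a)
        = ∑ l ∈ range (k + 1), ((stirling1 k l : ℤ) : R) * a ^ (k - l) * Y ^ (l+1)
          - ∑ l ∈ range (k + 1), (k:R) * ((stirling1 k l : ℤ) : R) * a ^ (k + 1 - l) * Y ^ l := by
      rw [Finset.sum_mul, ← Finset.sum_sub_distrib]
      refine Finset.sum_congr rfl fun l hl => ?_
      have hlk : l ≤ k := Nat.lt_succ_iff.mp (mem_range.mp hl)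
      have : k + 1 - l = (k - l) + 1 := by omega
      rw [this, pow_succ, pow_succ]
      ring
    rw [expand]
    have hsub : ∀ l, l ∈ range (k+1) → (k + 1 - (l+1)) = k - l := fun l _ => by omega
    have rhs2 : (∑ l ∈ range (k + 1),
        (((stirling1 k l : ℤ):R) - (k:R) * ((stirling1 k (l+1) : ℤ):R)) * a ^ (k + 1 - (l+1)) * Y ^ (l+1))
        = ∑ l ∈ range (k + 1), ((stirling1 k l : ℤ):R) * a ^ (k - l) * Y ^ (l+1)
          - ∑ l ∈ range (k + 1), (k:R) * ((stirling1 k (l+1) : ℤ):R) * a ^ (k - l) * Y ^ (l+1) := by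
      rw [← Finset.sum_sub_distrib]
      refine Finset.sum_congr rfl fun l hl => ?_
      rw [hsub l hl]; ring
    rw [rhs2]
    have key : ∑ l ∈ range (k + 1), (k:R) * ((stirling1 k l : ℤ) : R) * a ^ (k + 1 - l) * Y ^ l
        = (∑ l ∈ range (k + 1), (k:R) * ((stirling1 k (l+1) : ℤ):R) * a ^ (k - l) * Y ^ (l+1))
          + (k:R) * ((stirling1 k 0 : ℤ):R) * a ^ (k+1) := by
      rw [Finset.sum_range_succ' (fun l => (k:R) * ((stirling1 k l : ℤ) : R) * a ^ (k + 1 - l) * Y ^ l) k]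
      rw [Finset.sum_range_succ (fun l => (k:R) * ((stirling1 k (l+1) : ℤ):R) * a ^ (k - l) * Y ^ (l+1)) k]
      rw [stirling1_eq_zero (Nat.lt_succ_self k)]
      have : ∀ l ∈ range k, (k:R) * ((stirling1 k (l+1) : ℤ) : R) * a ^ (k + 1 - (l+1)) * Y ^ (l+1)
          = (k:R) * ((stirling1 k (l+1) : ℤ):R) * a ^ (k - l) * Y ^ (l+1) := by
        intro l hl
        have h : k + 1 - (l+1) = k - l := by omega
        rw [h]
      rw [Finset.sum_congr rfl this]
      push_cast
      ring
    rw [key]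
    simp only [Nat.sub_zero, pow_zero]
    ring

lemma degFall_succ {R : Type*} [CommRing R] (α x : R) (n : ℕ) :
    degFall α x (n + 1) = degFall α x n * (x - (n : R) * α) :=
  Finset.prod_range_succ _ _

lemma degFall_add {R : Type*} [CommRing R] (α x y : R) (k : ℕ) :
    degFall α (x + y) k
      = ∑ j ∈ range (k + 1), (k.choose j : R) * degFall α x j * degFall α y (k - j) := by
  induction k with
  | zero => simp [degFall]
  | succ k ih =>
    rw [degFall_succ, ih, Finset.sum_mul]
    have split : ∀ j ∈ range (k+1),
        (k.choose j : R) * degFall α x j * degFall α y (k - j) * (x + y - (k:R) * α)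
        = (k.choose j : R) * degFall α x (j+1) * degFall α y (k - j)
          + (k.choose j : R) * degFall α x j * degFall α y (k - j + 1) := by
      intro j hj
      have hjk : j ≤ k := Nat.lt_succ_iff.mp (mem_range.mp hj)
      rw [degFall_succ, degFall_succ]
      have : ((k - j : ℕ) : R) = (k : R) - (j : R) := by
        push_cast [Nat.cast_sub hjk]; ring
      rw [this]
      ring
    rw [Finset.sum_congr rfl split, Finset.sum_add_distrib]
    rw [Finset.sum_range_succ'
      (fun j => ((k+1).choose j : R) * degFall α x j * degFall α y (k + 1 - j)) (k+1)]
    have pascal : ∀ j, ((k+1).choose (j+1) : R) = (k.choose j : R) + (k.choose (j+1) : R) := by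
      intro j; rw [Nat.choose_succ_succ]; push_cast; ring
    simp only [pascal]
    have expand2 : ∀ j ∈ range (k+1),
        ((k.choose j : R) + (k.choose (j+1) : R)) * degFall α x (j+1) * degFall α y (k + 1 - (j+1))
        = (k.choose j : R) * degFall α x (j+1) * degFall α y (k - j)
          + (k.choose (j+1) : R) * degFall α x (j+1) * degFall α y (k - j) := by
      intro j hj
      have h : k + 1 - (j+1) = k - j := by omega
      rw [h]; ring
    rw [Finset.sum_congr rfl expand2, Finset.sum_add_distrib]
    have B : ∑ j ∈ range (k+1), (k.choose (j+1) : R) * degFall α x (j+1) * degFall α y (k - j)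
        = (∑ j ∈ range (k+1), (k.choose j : R) * degFall α x j * degFall α y (k - j + 1))
          - degFall α y (k+1) := by
      have h1 := Finset.sum_range_succ'
        (fun j => (k.choose j : R) * degFall α x j * degFall α y (k+1-j)) (k+1)
      rw [Finset.sum_range_succ
        (fun j => (k.choose j : R) * degFall α x j * degFall α y (k+1-j)) (k+1)] at h1
      rw [Nat.choose_eq_zero_of_lt (Nat.lt_succ_self k)] at h1
      simp only [Nat.cast_zero, zero_mul, add_zero, Nat.choose_zero_right, Nat.cast_one,
        one_mul, Nat.sub_zero] at h1
      have e1 : ∀ j ∈ range (k+1),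
          (k.choose (j+1) : R) * degFall α x (j+1) * degFall α y (k + 1 - (j+1))
          = (k.choose (j+1) : R) * degFall α x (j+1) * degFall α y (k - j) := by
        intro j hj
        have h : k + 1 - (j+1) = k - j := by omega
        rw [h]
      have e2 : ∀ j ∈ range (k+1),
          (k.choose j : R) * degFall α x j * degFall α y (k + 1 - j)
          = (k.choose j : R) * degFall α x j * degFall α y (k - j + 1) := by
        intro j hj
        have := Nat.lt_succ_iff.mp (mem_range.mp hj)
        have h : k + 1 - j = k - j + 1 := by omega
        rw [h]
      rw [Finset.sum_congr rfl e1, Finset.sum_congr rfl e2] at h1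
      have hd0 : degFall α x 0 = 1 := rfl
      rw [hd0] at h1
      linear_combination -h1
    have hd0 : degFall α x 0 = 1 := rfl
    simp only [Nat.choose_zero_right, Nat.cast_one, one_mul, Nat.sub_zero, hd0]
    linear_combination -B

/-- Linear functional sending a polynomial `Σ cᵢ Xⁱ` to `Σ cᵢ iⁿ`
(i.e. substituting `X = e^t` and taking the `n`-th Taylor coefficient times `n!`). -/
noncomputable def Ev (F : Type*) [Field F] (n : ℕ) : Polynomial F →ₗ[F] F where
  toFun p := p.sum fun i c => c * (i : F) ^ n
  map_add' p q := Polynomial.sum_add_index p q _ (by simp) (by intros; ring)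
  map_smul' a p := by
    simp only [RingHom.id_apply, smul_eq_mul]
    rw [Polynomial.sum_smul_index p a _ (by simp), Polynomial.sum_def, Polynomial.sum_def,
      Finset.mul_sum]
    exact Finset.sum_congr rfl fun i _ => by ring

lemma Ev_apply {F : Type*} [Field F] (n : ℕ) (p : Polynomial F) :
    Ev F n p = p.sum fun i c => c * (i : F) ^ n := rfl

lemma Ev_monomial {F : Type*} [Field F] (n i : ℕ) (c : F) :
    Ev F n (Polynomial.monomial i c) = c * (i : F) ^ n := by
  rw [Ev_apply, Polynomial.sum_monomial_index]
  simp

lemma Ev_C_mul {F : Type*} [Field F] (n : ℕ) (c : F) (p : Polynomial F) :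
    Ev F n (Polynomial.C c * p) = c * Ev F n p := by
  rw [← smul_eq_C_mul, map_smul, smul_eq_mul]

lemma Ev_linear_pow {F : Type*} [Field F] (n l : ℕ) (a b : F) :
    Ev F n ((C a * X + C b) ^ l)
      = ∑ i ∈ range (l + 1), (l.choose i : F) * a ^ i * b ^ (l - i) * (i : F) ^ n := by
  rw [add_pow, map_sum]
  refine Finset.sum_congr rfl fun i _ => ?_
  have : (C a * X) ^ i * (C b) ^ (l - i) * ((l.choose i : ℕ) : Polynomial F)
      = Polynomial.monomial i (a ^ i * b ^ (l - i) * (l.choose i : F)) := by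
    rw [mul_pow, ← C_pow, ← C_pow, ← C_eq_natCast, ← Polynomial.C_mul_X_pow_eq_monomial]
    simp only [C_mul]
    ring
  rw [this, Ev_monomial]
  ring

lemma Ev_degFall {F : Type*} [Field F] (n k : ℕ) (α a b : F) :
    Ev F n (degFall (C α) (C a * X + C b) k)
      = ∑ l ∈ range (k + 1), ∑ i ∈ range (l + 1),
          ((stirling1 k l : ℤ) : F) * α ^ (k - l) *
            ((l.choose i : F) * a ^ i * b ^ (l - i) * (i : F) ^ n) := by
  rw [show degFall (C α) (C a * X + C b) k
      = ∏ m ∈ range k, ((C a * X + C b) - (m : Polynomial F) * C α) from rfl]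
  rw [prod_sub_eq_sum_stirling1, map_sum]
  refine Finset.sum_congr rfl fun l _ => ?_
  have h1 : ((stirling1 k l : ℤ) : Polynomial F) * (C α) ^ (k - l) * (C a * X + C b) ^ l
      = C (((stirling1 k l : ℤ) : F) * α ^ (k - l)) * (C a * X + C b) ^ l := by
    rw [map_mul, map_pow, Polynomial.C_eq_intCast]
  rw [h1, Ev_C_mul, Ev_linear_pow, Finset.mul_sum]

lemma degFall_C {F : Type*} [CommRing F] (α z : F) (r : ℕ) :
    degFall (C α) (C z) r = C (degFall α z r) := by
  unfold degFall
  rw [map_prod]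
  refine Finset.prod_congr rfl fun m _ => ?_
  simp

lemma degFall_C_lin {F : Type*} [Field F] (α lam : F) (hlam : lam ≠ 0) (j : ℕ) :
    degFall (C α) (C lam * X - C lam) j
      = C (lam ^ j) * degFall (C (α / lam)) (C 1 * X + C (-1)) j := by
  unfold degFall
  have hc : (Polynomial.C (lam ^ j) : Polynomial F) = ∏ _i ∈ range j, Polynomial.C lam := by
    rw [Finset.prod_const, Finset.card_range, map_pow]
  rw [hc, ← Finset.prod_mul_distrib]
  refine Finset.prod_congr rfl fun m _ => ?_
  have h2 : ((m : F)) * α = lam * ((m : F) * (α / lam)) := by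
    field_simp
  rw [← C_eq_natCast (R := F) m, ← C_mul, ← C_mul, h2, C_mul, C_mul]
  simp only [C_neg, C_1]
  ring

/-- relation between the new type degenerate Simsek numbers and the
new type degenerate Stirling numbers of the second kind. -/
theorem ystar_eq_sum_stirling2star (F : Type*) [Field F] [CharZero F]
    (α lam : F) (hlam : lam ≠ 0) (n k : ℕ) :
    ystar α lam n k =
      (k.factorial : F)⁻¹ * ∑ j ∈ Finset.range (k + 1),
        (k.choose j : F) * (j.factorial : F) * lam ^ j * degFall α (lam + 1) (k - j) *
          stirling2star (α / lam) n j := by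
  have hN : (C lam * X + C 1 : Polynomial F)
      = (C lam * X - C lam) + C (lam + 1) := by
    rw [map_add]; ring
  have st : ∀ j, Ev F n (degFall (C (α / lam)) (C 1 * X + C (-1)) j)
      = (j.factorial : F) * stirling2star (α / lam) n j := by
    intro j
    have hfacj : (j.factorial : F) ≠ 0 := Nat.cast_ne_zero.mpr (Nat.factorial_ne_zero j)
    rw [Ev_degFall, stirling2star, ← mul_assoc, mul_inv_cancel₀ hfacj, one_mul]
    refine Finset.sum_congr rfl fun l _ => Finset.sum_congr rfl fun i _ => ?_
    rw [one_pow]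
    ring
  have main : Ev F n (degFall (C α) (C lam * X + C 1) k)
      = ∑ j ∈ range (k + 1), (k.choose j : F) * lam ^ j * degFall α (lam + 1) (k - j) *
          Ev F n (degFall (C (α / lam)) (C 1 * X + C (-1)) j) := by
    rw [hN, degFall_add, map_sum]
    refine Finset.sum_congr rfl fun j _ => ?_
    rw [degFall_C_lin α lam hlam, degFall_C]
    have h3 : ((k.choose j : ℕ) : Polynomial F) *
          (C (lam ^ j) * degFall (C (α / lam)) (C 1 * X + C (-1)) j) *
          C (degFall α (lam + 1) (k - j))
        = C ((k.choose j : F) * lam ^ j * degFall α (lam + 1) (k - j)) *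
          degFall (C (α / lam)) (C 1 * X + C (-1)) j := by
      rw [← C_eq_natCast]
      simp only [C_mul]
      ring
    rw [h3, Ev_C_mul]
  have lhs_eq : ystar α lam n k
      = (k.factorial : F)⁻¹ * Ev F n (degFall (C α) (C lam * X + C 1) k) := by
    rw [Ev_degFall, ystar]
    congr 1
    refine Finset.sum_congr rfl fun l _ => Finset.sum_congr rfl fun i _ => ?_
    rw [one_pow]
    ring
  rw [lhs_eq, main]
  congr 1
  refine Finset.sum_congr rfl fun j _ => ?_
  rw [st j]
  ring
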